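/- arXiv:1903.08335 — 15 statements merged into one kernel-verified Lean document; each statement's English description precedes it below -/
import Mathlib

section
/- Let z : ℕ → ℝ be a sequence of positive real numbers such that for every odd index n one has z_n · z_{n+2} = z_{n+1}² + 1, and for every even index n one has z_n · z_{n+2} = z_{n+1} + 1. Then the sequence is periodic with period 6: z_{n+6} = z_n for all n ≥ 1. -/
/-- The cluster dynamics of the cluster algebra of type B₂ is periodic with period 6:
if a sequence of positive reals satisfies `z n * z (n+2) = z (n+1)^2 + 1` for odd `n`
and `z n * z (n+2) = z (n+1) + 1` for even `n`, then `z (n+6) = z n` for all `n ≥ 1`. -/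
theorem stmt_0 (z : ℕ → ℝ) (hpos : ∀ n, 0 < z n)
    (hodd : ∀ n, Odd n → z n * z (n + 2) = z (n + 1) ^ 2 + 1)
    (heven : ∀ n, Even n → z n * z (n + 2) = z (n + 1) + 1) :
    ∀ n, 1 ≤ n → z (n + 6) = z n := by
  have p1 := (hpos 1).ne'
  have p2 := (hpos 2).ne'
  have p5 := (hpos 5).ne'
  have p6 := (hpos 6).ne'
  have e1 := hodd 1 ⟨0, by norm_num⟩
  have e2 := heven 2 ⟨1, rfl⟩
  have e3 := hodd 3 ⟨1, by norm_num⟩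
  have e4 := heven 4 ⟨2, rfl⟩
  have e5 := hodd 5 ⟨2, by norm_num⟩
  have e6 := heven 6 ⟨3, rfl⟩
  norm_num at e1 e2 e3 e4 e5 e6
  have E3 : z 3 * z 1 = z 2 ^ 2 + 1 := by linear_combination e1
  have E4 : z 4 * (z 1 * z 2) = z 1 + z 2 ^ 2 + 1 := by
    linear_combination z 1 * e2 + E3
  have hq : (0:ℝ) < z 2 ^ 2 + 1 := by positivity
  have E5 : z 5 * (z 1 * z 2 ^ 2) = (z 1 + 1) ^ 2 + z 2 ^ 2 := by
    have E5' : (z 5 * (z 1 * z 2 ^ 2)) * (z 2 ^ 2 + 1)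
        = ((z 1 + 1) ^ 2 + z 2 ^ 2) * (z 2 ^ 2 + 1) := by
      linear_combination (z 1 ^ 2 * z 2 ^ 2) * e3
        + (z 1 * z 2 * z 4 + z 1 + z 2 ^ 2 + 1) * E4
        - (z 1 * z 2 ^ 2 * z 5) * E3
    exact mul_right_cancel₀ hq.ne' E5'
  have hr : (0:ℝ) < z 1 + z 2 ^ 2 + 1 := by nlinarith [hpos 1, sq_nonneg (z 2)]
  have E6 : z 6 * z 2 = z 1 + 1 := by
    have E6' : (z 6 * z 2) * (z 1 + z 2 ^ 2 + 1)
        = (z 1 + 1) * (z 1 + z 2 ^ 2 + 1) := by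
      linear_combination (z 1 * z 2 ^ 2) * e4 + E5 - (z 2 * z 6) * E4
    exact mul_right_cancel₀ hr.ne' E6'
  have hs : (z 5 * z 2 ^ 2 : ℝ) ≠ 0 := mul_ne_zero p5 (pow_ne_zero 2 p2)
  have E7 : z 7 = z 1 := by
    have E7' : z 7 * (z 5 * z 2 ^ 2) = z 1 * (z 5 * z 2 ^ 2) := by
      linear_combination z 2 ^ 2 * e5 + (z 2 * z 6 + z 1 + 1) * E6 - E5
    exact mul_right_cancel₀ hs E7'
  have ht : (z 6 * z 2 : ℝ) ≠ 0 := mul_ne_zero p6 p2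
  have E8 : z 8 = z 2 := by
    have E8' : z 8 * (z 6 * z 2) = z 2 * (z 6 * z 2) := by
      linear_combination z 2 * e6 + z 2 * E7 - z 2 * E6
    exact mul_right_cancel₀ ht E8'
  have key : ∀ m, z (m + 7) = z (m + 1) := by
    intro m
    induction m using Nat.strong_induction_on with
    | _ m ih =>
      match m with
      | 0 => exact E7
      | 1 => exact E8
      | (k + 2) =>
        have h1 : z (k + 7) = z (k + 1) := ih k (by omega)
        have h2 : z (k + 8) = z (k + 2) := by
          have := ih (k + 1) (by omega)
          simpa [show k + 1 + 7 = k + 8 from by omega,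
                 show k + 1 + 1 = k + 2 from by omega] using this
        have hz : (z (k + 1) : ℝ) ≠ 0 := (hpos (k + 1)).ne'
        show z (k + 9) = z (k + 3)
        rcases Nat.even_or_odd (k + 1) with he | ho
        · have r1 := heven (k + 1) he
          have r2 := heven (k + 7) (by rcases he with ⟨w, hw⟩; exact ⟨w + 3, by omega⟩)
          simp only [show k + 1 + 2 = k + 3 from by omega,
            show k + 1 + 1 = k + 2 from by omega,
            show k + 7 + 2 = k + 9 from by omega,
            show k + 7 + 1 = k + 8 from by omega] at r1 r2
          rw [h1, h2] at r2
          exact mul_left_cancel₀ hz (by rw [r1, r2])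
        · have r1 := hodd (k + 1) ho
          have r2 := hodd (k + 7) (by rcases ho with ⟨w, hw⟩; exact ⟨w + 3, by omega⟩)
          simp only [show k + 1 + 2 = k + 3 from by omega,
            show k + 1 + 1 = k + 2 from by omega,
            show k + 7 + 2 = k + 9 from by omega,
            show k + 7 + 1 = k + 8 from by omega] at r1 r2
          rw [h1, h2] at r2
          exact mul_left_cancel₀ hz (by rw [r1, r2])
  intro n hn
  obtain ⟨m, rfl⟩ : ∃ m, n = m + 1 := ⟨n - 1, by omega⟩
  have := key m
  simpa [show m + 1 + 6 = m + 7 from by omega] using this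
end

section
/- Let x : ℕ → ℝ be a sequence of positive real numbers satisfying x_n · x_{n+4} = x_{n+1} · x_{n+3} + 1 for all n ≥ 1. Then the quantity K_n := (x_n + x_{n+6}) / x_{n+3} is independent of n; that is, the iterates satisfy the constant-coefficient linear recurrence x_{n+6} + x_n = K · x_{n+3} for a constant K determined by the initial data. -/
/-- For the Ã₁,₃ cluster map `x n * x (n+4) = x (n+1) * x (n+3) + 1` on positive reals,
the quantity `(x n + x (n+6)) / x (n+3)` is a constant `K` independent of `n`, i.e.
the iterates satisfy the linear recurrence `x (n+6) + x n = K * x (n+3)`. -/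
theorem stmt_2 (x : ℕ → ℝ) (hpos : ∀ n, 0 < x n)
    (hrec : ∀ n, 1 ≤ n → x n * x (n + 4) = x (n + 1) * x (n + 3) + 1) :
    ∃ K : ℝ, ∀ n, 1 ≤ n → x (n + 6) + x n = K * x (n + 3) := by
  refine ⟨(x 7 + x 1) / x 4, ?_⟩
  intro n hn
  induction n, hn using Nat.le_induction with
  | base =>
    have h4 : x 4 ≠ 0 := (hpos 4).ne'
    field_simp
  | succ n hn ih =>
    have h1 := hrec n hn
    have h2 := hrec (n + 3) (by omega)
    have e1 : n + 3 + 4 = n + 7 := by ring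
    have e2 : n + 3 + 1 = n + 4 := by ring
    have e3 : n + 3 + 3 = n + 6 := by ring
    rw [e1, e2, e3] at h2
    have h3 : x (n + 3) ≠ 0 := (hpos _).ne'
    have key : x (n + 3) * (x (n + 7) + x (n + 1))
        = x (n + 4) * (x (n + 6) + x n) := by nlinarith [h1, h2]
    have hstep : x (n + 7) + x (n + 1) = (x 7 + x 1) / x 4 * x (n + 4) := by
      apply mul_left_cancel₀ h3
      rw [key, ih]; ring
    have e4 : n + 1 + 6 = n + 7 := by ring
    have e5 : n + 1 + 3 = n + 4 := by ring
    rw [e4, e5]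
    exact hstep
end

section
/- Let x : ℕ → ℝ be a sequence of positive real numbers satisfying x_n · x_{n+4} = x_{n+1} · x_{n+3} + 1 for all n ≥ 1. Then the quantity J_n := (x_n + x_{n+2}) / x_{n+1} is periodic in n with period 3: J_{n+3} = J_n for all n ≥ 1. Equivalently, there are period-3 coefficients J_n such that the linear relation x_{n+2} − J_n x_{n+1} + x_n = 0 holds for all n. -/
/-!
Clearing denominators, `J (n + 3) = J n` says exactly that
`x n * x (n + 4) - x (n + 1) * x (n + 3)` takes the same value at `n` and `n + 1`,
and the recurrence makes this quantity identically `1`.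
-/

theorem add_div_eq_of_mul_sub_mul_eq {K : Type*} [Field K] (x : ℕ → K) {n : ℕ}
    (h₁ : x (n + 1) ≠ 0) (h₄ : x (n + 4) ≠ 0)
    (h : x n * x (n + 4) - x (n + 1) * x (n + 3) = x (n + 1) * x (n + 5) - x (n + 2) * x (n + 4)) :
    (x (n + 3) + x (n + 5)) / x (n + 4) = (x n + x (n + 2)) / x (n + 1) := by
  rw [div_eq_div_iff h₄ h₁]
  linear_combination -h

/-- For the Ã₁,₃ cluster map `x n * x (n+4) = x (n+1) * x (n+3) + 1` on positive reals,
the quantity `J n = (x n + x (n+2)) / x (n+1)` is periodic with period 3, and the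
linear relation `x (n+2) - J n * x (n+1) + x n = 0` holds. -/
theorem stmt_3 (x : ℕ → ℝ) (hpos : ∀ n, 0 < x n)
    (hrec : ∀ n, 1 ≤ n → x n * x (n + 4) = x (n + 1) * x (n + 3) + 1)
    (J : ℕ → ℝ) (hJ : ∀ n, J n = (x n + x (n + 2)) / x (n + 1)) :
    (∀ n, 1 ≤ n → J (n + 3) = J n) ∧
    (∀ n, 1 ≤ n → x (n + 2) - J n * x (n + 1) + x n = 0) := by
  refine ⟨fun n hn => ?_, fun n _ => ?_⟩
  · rw [hJ, hJ]
    refine add_div_eq_of_mul_sub_mul_eq x (hpos _).ne' (hpos _).ne' ?_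
    linear_combination hrec n hn - hrec (n + 1) (by omega)
  · rw [hJ, div_mul_cancel₀ _ (hpos _).ne']
    ring
end

section
/- Let x : ℕ → ℝ be a sequence of positive real numbers satisfying x_n · x_{n+4} = x_{n+1} · x_{n+3} + 1 for all n ≥ 1. Then for every n the 3×3 matrix D̃_n with rows (x_n, x_{n+1}, x_{n+2}), (x_{n+3}, x_{n+4}, x_{n+5}), (x_{n+6}, x_{n+7}, x_{n+8}) has determinant zero. -/
/-- For the Ã₁,₃ cluster map `x n * x (n+4) = x (n+1) * x (n+3) + 1` on positive reals,
the 3×3 matrix with rows `(x n, x (n+1), x (n+2))`, `(x (n+3), x (n+4), x (n+5))`,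
`(x (n+6), x (n+7), x (n+8))` has zero determinant. -/
theorem stmt_4 (x : ℕ → ℝ) (hpos : ∀ n, 0 < x n)
    (hrec : ∀ n, 1 ≤ n → x n * x (n + 4) = x (n + 1) * x (n + 3) + 1) :
    ∀ n, 1 ≤ n →
      Matrix.det !![x n, x (n + 1), x (n + 2);
                    x (n + 3), x (n + 4), x (n + 5);
                    x (n + 6), x (n + 7), x (n + 8)] = 0 := by
  intro n hn
  have h0 := hrec n hn
  have h1 := hrec (n + 1) (by omega)
  have h3 := hrec (n + 3) (by omega)
  have h4 := hrec (n + 4) (by omega)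
  have hne : x (n + 4) ≠ 0 := (hpos (n + 4)).ne'
  apply mul_left_cancel₀ hne
  rw [mul_zero]
  have hdet : Matrix.det !![x n, x (n + 1), x (n + 2);
      x (n + 3), x (n + 4), x (n + 5);
      x (n + 6), x (n + 7), x (n + 8)] =
      x n * (x (n+4) * x (n+8) - x (n+5) * x (n+7))
      - x (n+1) * (x (n+3) * x (n+8) - x (n+5) * x (n+6))
      + x (n+2) * (x (n+3) * x (n+7) - x (n+4) * x (n+6)) := by
    simp [Matrix.det_fin_three]; ring
  rw [hdet]
  have e0 : x n * x (n + 4) = x (n + 1) * x (n + 3) + 1 := h0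
  have e1 : x (n + 1) * x (n + 5) = x (n + 2) * x (n + 4) + 1 := by
    have := h1; ring_nf at this ⊢; linarith [this]
  have e3 : x (n + 3) * x (n + 7) = x (n + 4) * x (n + 6) + 1 := by
    have := h3; ring_nf at this ⊢; linarith [this]
  have e4 : x (n + 4) * x (n + 8) = x (n + 5) * x (n + 7) + 1 := by
    have := h4; ring_nf at this ⊢; linarith [this]
  linear_combination (x (n+4) * x (n+8) - x (n+5) * x (n+7)) * e0 + e4 +
    (x (n+4) * x (n+6) - x (n+3) * x (n+7)) * e1 - e3
end

section
/- Define a sequence x : ℕ → ℚ by x_1 = x_2 = x_3 = x_4 = 1 and x_{n+4} = (x_{n+1} · x_{n+3} + 1)/x_n for n ≥ 1. Then every x_n is a positive integer, and the sequence satisfies the linear recurrence x_{n+6} + x_n = 5 · x_{n+3} for all n ≥ 1. -/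
/-- With initial values `(1,1,1,1)`, the Ã₁,₃ recurrence
`x (n+4) = (x (n+1) * x (n+3) + 1) / x n` generates positive integers, and its iterates
satisfy the linear recurrence `x (n+6) + x n = 5 * x (n+3)`. -/
theorem stmt_5 (x : ℕ → ℚ)
    (h1 : x 1 = 1) (h2 : x 2 = 1) (h3 : x 3 = 1) (h4 : x 4 = 1)
    (hrec : ∀ n, 1 ≤ n → x (n + 4) = (x (n + 1) * x (n + 3) + 1) / x n) :
    (∀ n, 1 ≤ n → ∃ k : ℤ, 0 < k ∧ x n = (k : ℚ)) ∧
    (∀ n, 1 ≤ n → x (n + 6) + x n = 5 * x (n + 3)) := by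
  -- positivity
  have hpos : ∀ n, 1 ≤ n → 0 < x n := by
    intro n
    induction n using Nat.strong_induction_on with
    | _ n ih =>
      intro hn
      match n, hn with
      | 1, _ => rw [h1]; norm_num
      | 2, _ => rw [h2]; norm_num
      | 3, _ => rw [h3]; norm_num
      | 4, _ => rw [h4]; norm_num
      | (m+5), _ =>
        have p1 : 0 < x (m+1) := ih (m+1) (by omega) (by omega)
        have p2 : 0 < x (m+2) := ih (m+2) (by omega) (by omega)
        have p4 : 0 < x (m+4) := ih (m+4) (by omega) (by omega)
        have := hrec (m+1) (by omega)
        have e : x (m+5) = (x (m+2) * x (m+4) + 1) / x (m+1) := by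
          convert this using 3 <;> omega
        rw [e]
        exact div_pos (by positivity) p1
  -- explicit early values
  have h5 : x 5 = 2 := by
    have := hrec 1 le_rfl; rw [h1, h2, h4] at this; norm_num at this; exact this
  have h6 : x 6 = 3 := by
    have := hrec 2 (by norm_num); rw [h2, h3, h5] at this; norm_num at this; exact this
  have h7 : x 7 = 4 := by
    have := hrec 3 (by norm_num); rw [h3, h4, h6] at this; norm_num at this; exact this
  -- multiplied form of the recurrence
  have hmul : ∀ n, 1 ≤ n → x n * x (n+4) = x (n+1) * x (n+3) + 1 := by
    intro n hn
    have hne : x n ≠ 0 := (hpos n hn).ne'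
    rw [hrec n hn]
    field_simp
  -- the linear recurrence
  have hlin : ∀ n, 1 ≤ n → x (n + 6) + x n = 5 * x (n + 3) := by
    intro n hn
    induction n, hn using Nat.le_induction with
    | base => rw [h7, h1, h4]; norm_num
    | succ n hn ih =>
      have hA := hmul n hn
      have hB := hmul (n+3) (by omega)
      have hb : x (n+3) ≠ 0 := (hpos (n+3) (by omega)).ne'
      have key : x (n+3) * (x (n+1+6) + x (n+1)) = x (n+3) * (5 * x (n+1+3)) := by
        have e7 : n+1+6 = n+3+4 := by omega
        have e4 : n+1+3 = n+4 := by omega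
        rw [e7, e4]
        have e5 : n+3+1 = n+4 := by omega
        have e6 : n+3+3 = n+6 := by omega
        rw [e5, e6] at hB
        linear_combination hB + x (n+4) * ih - hA
      exact mul_left_cancel₀ hb key
  refine ⟨?_, hlin⟩
  -- integrality
  have hint : ∀ n, 1 ≤ n → ∃ k : ℤ, x n = (k : ℚ) := by
    intro n
    induction n using Nat.strong_induction_on with
    | _ n ih =>
      intro hn
      match n, hn with
      | 1, _ => exact ⟨1, by rw [h1]; norm_num⟩
      | 2, _ => exact ⟨1, by rw [h2]; norm_num⟩
      | 3, _ => exact ⟨1, by rw [h3]; norm_num⟩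
      | 4, _ => exact ⟨1, by rw [h4]; norm_num⟩
      | 5, _ => exact ⟨2, by rw [h5]; norm_num⟩
      | 6, _ => exact ⟨3, by rw [h6]; norm_num⟩
      | (m+7), _ =>
        obtain ⟨a, ha⟩ := ih (m+1) (by omega) (by omega)
        obtain ⟨b, hb⟩ := ih (m+4) (by omega) (by omega)
        refine ⟨5 * b - a, ?_⟩
        have := hlin (m+1) (by omega)
        have e7 : m+1+6 = m+7 := by omega
        have e4 : m+1+3 = m+4 := by omega
        rw [e7, e4] at this
        push_cast
        linarith [this, ha.symm ▸ this]
  intro n hn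
  obtain ⟨k, hk⟩ := hint n hn
  refine ⟨k, ?_, hk⟩
  have := hpos n hn
  rw [hk] at this
  exact_mod_cast this
end

section
/- Let x : ℕ → ℝ be a sequence of positive real numbers satisfying x_n · x_{n+3} = x_{n+1}² + x_{n+2}² for all n ≥ 1. Then the quantity K_n := (x_n² + x_{n+1}² + x_{n+2}²)/(x_n · x_{n+1} · x_{n+2}) is independent of n, and the relation x_{n+3} + x_n = K_n · x_{n+1} · x_{n+2} holds for all n. -/
/-- For the Markoff-type recurrence `x n * x (n+3) = x (n+1)^2 + x (n+2)^2` on positive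
reals, the quantity `K n = (x n ^2 + x (n+1)^2 + x (n+2)^2)/(x n * x (n+1) * x (n+2))` is
independent of `n`, and `x (n+3) + x n = K n * x (n+1) * x (n+2)` holds for all `n ≥ 1`. -/
theorem stmt_6 (x : ℕ → ℝ) (hpos : ∀ n, 0 < x n)
    (hrec : ∀ n, 1 ≤ n → x n * x (n + 3) = x (n + 1) ^ 2 + x (n + 2) ^ 2)
    (K : ℕ → ℝ)
    (hK : ∀ n, K n = (x n ^ 2 + x (n + 1) ^ 2 + x (n + 2) ^ 2) / (x n * x (n + 1) * x (n + 2))) :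
    (∀ n, 1 ≤ n → K (n + 1) = K n) ∧
    (∀ n, 1 ≤ n → x (n + 3) + x n = K n * x (n + 1) * x (n + 2)) := by
  constructor
  · intro n hn
    have h := hrec n hn
    rw [hK (n + 1), hK n, div_eq_div_iff (by exact (mul_pos (mul_pos (hpos _) (hpos _)) (hpos _)).ne') (by exact (mul_pos (mul_pos (hpos _) (hpos _)) (hpos _)).ne')]
    have e1 : n + 1 + 1 = n + 2 := by ring
    have e2 : n + 1 + 2 = n + 3 := by ring
    rw [e1, e2]
    linear_combination (x (n + 1) * x (n + 2) * (x (n + 3) - x n)) * h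
  · intro n hn
    have h := hrec n hn
    rw [hK n, div_mul_eq_mul_div, div_mul_eq_mul_div, eq_div_iff (by exact (mul_pos (mul_pos (hpos _) (hpos _)) (hpos _)).ne')]
    linear_combination x (n + 1) * x (n + 2) * h
end

section
/- Define a sequence x : ℕ → ℚ by x_1 = x_2 = x_3 = 1 and x_{n+3} = (x_{n+1}² + x_{n+2}²)/x_n for n ≥ 1. Then every x_n is a positive integer, and every adjacent triple satisfies Markoff's equation: x_n² + x_{n+1}² + x_{n+2}² = 3 · x_n · x_{n+1} · x_{n+2} for all n ≥ 1. -/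
/-- With initial values `(1,1,1)`, the recurrence `x (n+3) = (x (n+1)^2 + x (n+2)^2) / x n`
generates positive integers, and every adjacent triple satisfies Markoff's equation
`x² + y² + z² = 3xyz`. -/
theorem stmt_7 (x : ℕ → ℚ)
    (h1 : x 1 = 1) (h2 : x 2 = 1) (h3 : x 3 = 1)
    (hrec : ∀ n, 1 ≤ n → x (n + 3) = (x (n + 1) ^ 2 + x (n + 2) ^ 2) / x n) :
    (∀ n, 1 ≤ n → ∃ k : ℤ, 0 < k ∧ x n = (k : ℚ)) ∧
    (∀ n, 1 ≤ n →
      x n ^ 2 + x (n + 1) ^ 2 + x (n + 2) ^ 2 = 3 * x n * x (n + 1) * x (n + 2)) := by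
  have key : ∀ n, 1 ≤ n → ∃ a b c : ℤ, 0 < a ∧ 0 < b ∧ 0 < c ∧
      x n = (a : ℚ) ∧ x (n + 1) = (b : ℚ) ∧ x (n + 2) = (c : ℚ) ∧
      x n ^ 2 + x (n + 1) ^ 2 + x (n + 2) ^ 2 = 3 * x n * x (n + 1) * x (n + 2) := by
    intro n hn
    induction n, hn using Nat.le_induction with
    | base =>
      refine ⟨1, 1, 1, one_pos, one_pos, one_pos, ?_, ?_, ?_, ?_⟩ <;>
        norm_num [h1, h2, h3]
    | succ n hn ih =>
      obtain ⟨a, b, c, ha, hb, hc, hxa, hxb, hxc, hm⟩ := ih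
      have haq : (0 : ℚ) < x n := by rw [hxa]; exact_mod_cast ha
      have hbq : (0 : ℚ) < x (n + 1) := by rw [hxb]; exact_mod_cast hb
      have hcq : (0 : ℚ) < x (n + 2) := by rw [hxc]; exact_mod_cast hc
      have hane : x n ≠ 0 := ne_of_gt haq
      have hrn := hrec n hn
      have hnum : x (n + 1) ^ 2 + x (n + 2) ^ 2
          = (3 * x (n + 1) * x (n + 2) - x n) * x n := by linear_combination hm
      have hx3 : x (n + 3) = 3 * x (n + 1) * x (n + 2) - x n := by
        rw [hrn, hnum, mul_div_cancel_right₀ _ hane]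
      have hx3pos : (0 : ℚ) < x (n + 3) := by
        rw [hrn]
        exact div_pos (by positivity) haq
      have hx3c : x (n + 3) = ((3 * b * c - a : ℤ) : ℚ) := by
        rw [hx3, hxa, hxb, hxc]; push_cast; ring
      have hcpos : 0 < 3 * b * c - a := by
        have : (0 : ℚ) < ((3 * b * c - a : ℤ) : ℚ) := hx3c ▸ hx3pos
        exact_mod_cast this
      exact ⟨b, c, 3 * b * c - a, hb, hc, hcpos, hxb, hxc, hx3c, by
        rw [show n + 1 + 2 = n + 3 from rfl, hx3]; linear_combination hm⟩
  constructor
  · intro n hn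
    obtain ⟨a, _, _, ha, _, _, hxa, _⟩ := key n hn
    exact ⟨a, ha, hxa⟩
  · intro n hn
    obtain ⟨_, _, _, _, _, _, _, _, _, hm⟩ := key n hn
    exact hm
end

section
/- Define a sequence x : ℕ → ℚ by x_1 = x_2 = ⋯ = x_6 = 1 and x_{n+6} = (x_{n+1} · x_{n+5} + x_{n+3}²)/x_n for n ≥ 1. Then every x_n is a positive integer. -/
/-!
The sequence has two conserved quantities: along any Somos-6 sequence the combinations
`(a₀a₉ + a₂a₇ - a₃a₆) / (a₄a₅)` and
`(a₀a₃a₉ + a₂²a₈ - a₀a₅a₇ - a₁a₃a₈ - a₂a₄a₆) / (a₃a₄a₅)`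
do not depend on the starting index; for the initial values `1` they equal `9` and `3`.
With them, `a (n + 11)` is a polynomial in earlier terms divided by `a n`, and also by
`a (n + 1)` and by `a (n + 2)`. No prime divides three consecutive terms: by the recurrence
it would also divide the three terms two places earlier, and eventually an initial `1`.
Bézout then makes `a (n + 11)` integral.
-/

theorem mem_bot_of_span_eq_top {R K : Type*} [CommRing R] [CommRing K] [Algebra R K]
    {s : Set R} (hs : Ideal.span s = ⊤) {q : K}
    (h : ∀ d ∈ s, algebraMap R K d * q ∈ (⊥ : Subalgebra R K)) :
    q ∈ (⊥ : Subalgebra R K) :=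
  Submodule.mem_of_span_top_of_smul_mem (Subalgebra.toSubmodule ⊥) s hs q fun d => by
    rw [Subalgebra.mem_toSubmodule, Algebra.smul_def]
    exact h d d.2

section Coprimality

variable {R : Type*} [CommRing R] {y : ℕ → R}

theorem span_triple_eq_top_of_somos6 {n : ℕ}
    (h₀ : y n * y (n + 6) = y (n + 1) * y (n + 5) + y (n + 3) ^ 2)
    (h₁ : y (n + 1) * y (n + 7) = y (n + 2) * y (n + 6) + y (n + 4) ^ 2)
    (h : Ideal.span {y (n + 3), y (n + 4), y (n + 5)} = ⊤) :
    Ideal.span {y (n + 5), y (n + 6), y (n + 7)} = ⊤ := by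
  set I := Ideal.span {y (n + 5), y (n + 6), y (n + 7)}
  have h₅ : y (n + 5) ∈ I := Ideal.subset_span (by simp)
  have h₆ : y (n + 6) ∈ I := Ideal.subset_span (by simp)
  have h₇ : y (n + 7) ∈ I := Ideal.subset_span (by simp)
  rw [← Ideal.radical_eq_top, eq_top_iff, ← h, Ideal.span_le]
  rintro _ (rfl | rfl | rfl)
  · refine ⟨2, ?_⟩
    rw [show y (n + 3) ^ 2 = y n * y (n + 6) - y (n + 1) * y (n + 5) by linear_combination -h₀]
    exact sub_mem (I.mul_mem_left _ h₆) (I.mul_mem_left _ h₅)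
  · refine ⟨2, ?_⟩
    rw [show y (n + 4) ^ 2 = y (n + 1) * y (n + 7) - y (n + 2) * y (n + 6) by
      linear_combination -h₁]
    exact sub_mem (I.mul_mem_left _ h₇) (I.mul_mem_left _ h₆)
  · exact Ideal.le_radical h₅

theorem span_somos6_triple_eq_top {N : ℕ} (hunit : ∀ i < 5, IsUnit (y i))
    (hrec : ∀ n, n + 6 < N → y n * y (n + 6) = y (n + 1) * y (n + 5) + y (n + 3) ^ 2) :
    ∀ m, m + 2 < N → Ideal.span {y m, y (m + 1), y (m + 2)} = ⊤ := by
  intro m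
  induction m using Nat.strong_induction_on with
  | _ m ih =>
    intro hm
    rcases lt_or_ge m 5 with hm5 | hm5
    · exact Ideal.eq_top_of_isUnit_mem _ (Ideal.subset_span (by simp)) (hunit m hm5)
    · obtain ⟨n, rfl⟩ := Nat.exists_eq_add_of_le' hm5
      exact span_triple_eq_top_of_somos6 (hrec n (by omega)) (hrec (n + 1) (by omega))
        (ih (n + 3) (by omega) (by omega))

end Coprimality

theorem somos6_pos {K : Type*} [Field K] [LinearOrder K] [IsStrictOrderedRing K] {a : ℕ → K}
    (hinit : ∀ i < 6, 0 < a i)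
    (hrec : ∀ n, a (n + 6) = (a (n + 1) * a (n + 5) + a (n + 3) ^ 2) / a n) (n : ℕ) :
    0 < a n := by
  induction n using Nat.strong_induction_on with
  | _ n ih =>
    rcases lt_or_ge n 6 with hn | hn
    · exact hinit n hn
    · obtain ⟨m, rfl⟩ := Nat.exists_eq_add_of_le' hn
      rw [hrec m]
      exact div_pos (add_pos (mul_pos (ih _ (by omega)) (ih _ (by omega)))
        (pow_pos (ih _ (by omega)) 2)) (ih m (by omega))

section Invariants

variable {R : Type*} [CommRing R] [IsDomain R] {a : ℕ → R}

theorem somos6_bilinear9 (ha : ∀ n, a n ≠ 0)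
    (hrec : ∀ n, a n * a (n + 6) = a (n + 1) * a (n + 5) + a (n + 3) ^ 2) {α : R}
    (h₀ : a 0 * a 9 + a 2 * a 7 = a 3 * a 6 + α * (a 4 * a 5)) (n : ℕ) :
    a n * a (n + 9) + a (n + 2) * a (n + 7)
      = a (n + 3) * a (n + 6) + α * (a (n + 4) * a (n + 5)) := by
  induction n with
  | zero => exact h₀
  | succ n ih =>
    refine mul_left_cancel₀ (ha (n + 4)) ?_
    linear_combination a (n + 6) * ih - a (n + 9) * hrec n + a (n + 7) * hrec (n + 1)
      - a (n + 3) * hrec (n + 3) + a (n + 1) * hrec (n + 4)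

theorem somos6_cubic (ha : ∀ n, a n ≠ 0)
    (hrec : ∀ n, a n * a (n + 6) = a (n + 1) * a (n + 5) + a (n + 3) ^ 2) {β : R}
    (h₀ : a 0 * a 5 * a 7 + a 1 * a 3 * a 8 + a 2 * a 4 * a 6 + β * (a 3 * a 4 * a 5)
      = a 0 * a 3 * a 9 + a 2 ^ 2 * a 8) (n : ℕ) :
    a n * a (n + 5) * a (n + 7) + a (n + 1) * a (n + 3) * a (n + 8)
      + a (n + 2) * a (n + 4) * a (n + 6) + β * (a (n + 3) * a (n + 4) * a (n + 5))
      = a n * a (n + 3) * a (n + 9) + a (n + 2) ^ 2 * a (n + 8) := by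
  induction n with
  | zero => exact h₀
  | succ n ih =>
    refine mul_left_cancel₀ (ha (n + 3)) ?_
    linear_combination a (n + 6) * ih + (a (n + 3) * a (n + 9) - a (n + 5) * a (n + 7)) * hrec n
      - a (n + 2) * a (n + 8) * hrec (n + 1) + a (n + 1) * a (n + 7) * hrec (n + 2)
      + a (n + 2) * a (n + 4) * hrec (n + 3) - a (n + 1) * a (n + 3) * hrec (n + 4)

theorem somos6_bilinear10 (ha : ∀ n, a n ≠ 0)
    (hrec : ∀ n, a n * a (n + 6) = a (n + 1) * a (n + 5) + a (n + 3) ^ 2) {α β : R}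
    (h9 : ∀ n, a n * a (n + 9) + a (n + 2) * a (n + 7)
      = a (n + 3) * a (n + 6) + α * (a (n + 4) * a (n + 5)))
    (hcubic : ∀ n, a n * a (n + 5) * a (n + 7) + a (n + 1) * a (n + 3) * a (n + 8)
      + a (n + 2) * a (n + 4) * a (n + 6) + β * (a (n + 3) * a (n + 4) * a (n + 5))
      = a n * a (n + 3) * a (n + 9) + a (n + 2) ^ 2 * a (n + 8)) (n : ℕ) :
    a n * a (n + 10) = a (n + 1) * a (n + 9) + α * (a (n + 2) * a (n + 8))
      - β * (a (n + 3) * a (n + 7)) - α * (a (n + 4) * a (n + 6)) := by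
  refine mul_left_cancel₀ (mul_ne_zero (ha (n + 4)) (ha (n + 5))) ?_
  linear_combination a (n + 4) * a (n + 9) * hrec n - a (n + 3) * a (n + 8) * hrec (n + 1)
    - a n * a (n + 9) * hrec (n + 2) + a (n + 3) * a (n + 4) * hrec (n + 3)
    + a n * a (n + 5) * hrec (n + 4) + (a (n + 2) * a (n + 8) - a (n + 4) * a (n + 6)) * h9 n
    + a (n + 7) * hcubic n

theorem somos6_bilinear11 (ha : ∀ n, a n ≠ 0)
    (hrec : ∀ n, a n * a (n + 6) = a (n + 1) * a (n + 5) + a (n + 3) ^ 2) {α β : R}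
    (h9 : ∀ n, a n * a (n + 9) + a (n + 2) * a (n + 7)
      = a (n + 3) * a (n + 6) + α * (a (n + 4) * a (n + 5)))
    (hcubic : ∀ n, a n * a (n + 5) * a (n + 7) + a (n + 1) * a (n + 3) * a (n + 8)
      + a (n + 2) * a (n + 4) * a (n + 6) + β * (a (n + 3) * a (n + 4) * a (n + 5))
      = a n * a (n + 3) * a (n + 9) + a (n + 2) ^ 2 * a (n + 8)) (n : ℕ) :
    a n * a (n + 11)
      = a (n + 2) * a (n + 9) + α * (a (n + 3) * a (n + 8)) + β * (a (n + 5) * a (n + 6)) := by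
  refine mul_left_cancel₀ (mul_ne_zero (ha (n + 4)) (ha (n + 5))) ?_
  linear_combination (a (n + 5) * a (n + 9) - a (n + 6) * a (n + 8) + a (n + 7) ^ 2) * hrec n
    - a (n + 3) * a (n + 7) * hrec (n + 2) - a n * a (n + 8) * hrec (n + 3)
    + (a n * a (n + 6) - a (n + 1) * a (n + 5)) * hrec (n + 4) + a n * a (n + 4) * hrec (n + 5)
    + a (n + 3) * a (n + 8) * h9 n - a (n + 5) * hcubic (n + 1)

end Invariants

section Integrality

variable {R K : Type*} [CommRing R] [CommRing K] [Algebra R K] {a : ℕ → K}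

theorem somos6_exists_triple_span_eq_top (hinj : Function.Injective (algebraMap R K))
    (hrec : ∀ n, a n * a (n + 6) = a (n + 1) * a (n + 5) + a (n + 3) ^ 2)
    (hinit : ∀ i < 5, ∃ u : Rˣ, algebraMap R K u = a i) {n : ℕ}
    (hint : ∀ m < n + 5, a m ∈ (⊥ : Subalgebra R K)) :
    ∃ d₀ d₁ d₂ : R, algebraMap R K d₀ = a n ∧ algebraMap R K d₁ = a (n + 1) ∧
      algebraMap R K d₂ = a (n + 2) ∧ Ideal.span {d₀, d₁, d₂} = ⊤ := by
  obtain ⟨y, hy⟩ : ∃ y : ℕ → R, ∀ m < n + 5, algebraMap R K (y m) = a m :=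
    ⟨fun m => if h : m < n + 5 then (Algebra.mem_bot.1 (hint m h)).choose else 0,
      fun m hm => by simpa [hm] using (Algebra.mem_bot.1 (hint m hm)).choose_spec⟩
  have hunit : ∀ i < 5, IsUnit (y i) := fun i hi => by
    obtain ⟨u, hu⟩ := hinit i hi
    exact hinj (hu.trans (hy i (by omega)).symm) ▸ u.isUnit
  have hrecy : ∀ m, m + 6 < n + 5 →
      y m * y (m + 6) = y (m + 1) * y (m + 5) + y (m + 3) ^ 2 := fun m hm => hinj <| by
    simpa only [map_add, map_mul, map_pow, hy m (by omega), hy (m + 1) (by omega),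
      hy (m + 3) (by omega), hy (m + 5) (by omega), hy (m + 6) hm] using hrec m
  exact ⟨y n, y (n + 1), y (n + 2), hy n (by omega), hy (n + 1) (by omega),
    hy (n + 2) (by omega), span_somos6_triple_eq_top hunit hrecy n (by omega)⟩

theorem somos6_mem_bot [IsDomain K] (hinj : Function.Injective (algebraMap R K))
    (ha : ∀ n, a n ≠ 0) (hrec : ∀ n, a n * a (n + 6) = a (n + 1) * a (n + 5) + a (n + 3) ^ 2)
    (hinit : ∀ i < 6, ∃ u : Rˣ, algebraMap R K u = a i) {α β : R}
    (h9 : a 0 * a 9 + a 2 * a 7 = a 3 * a 6 + algebraMap R K α * (a 4 * a 5))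
    (hcubic : a 0 * a 5 * a 7 + a 1 * a 3 * a 8 + a 2 * a 4 * a 6
      + algebraMap R K β * (a 3 * a 4 * a 5) = a 0 * a 3 * a 9 + a 2 ^ 2 * a 8) (N : ℕ) :
    a N ∈ (⊥ : Subalgebra R K) := by
  have h9' := somos6_bilinear9 ha hrec h9
  have hcubic' := somos6_cubic ha hrec hcubic
  have h10 := somos6_bilinear10 ha hrec h9' hcubic'
  have h11 := somos6_bilinear11 ha hrec h9' hcubic'
  induction N using Nat.strong_induction_on with
  | _ N ih =>
    obtain hN | ⟨n, rfl, hn⟩ | ⟨n, rfl⟩ :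
        N < 6 ∨ (∃ n, N = n + 6 ∧ n < 6) ∨ ∃ n, N = n + 11 := by
      by_cases h₆ : N < 6
      · exact .inl h₆
      by_cases h₁₂ : N < 12
      · exact .inr (.inl ⟨N - 6, by omega, by omega⟩)
      · exact .inr (.inr ⟨N - 11, by omega⟩)
    · obtain ⟨u, hu⟩ := hinit N hN
      exact hu ▸ Subalgebra.algebraMap_mem _ _
    · obtain ⟨u, hu⟩ := hinit n hn
      refine mem_bot_of_span_eq_top (s := {(u : R)}) (by simp) ?_
      rintro _ rfl
      rw [hu, hrec n]
      apply_rules [add_mem, mul_mem, pow_mem, ih] <;> omega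
    · obtain ⟨d₀, d₁, d₂, hd₀, hd₁, hd₂, hspan⟩ :=
        somos6_exists_triple_span_eq_top hinj hrec (fun i hi => hinit i (by omega)) (n := n)
          fun m hm => ih m (by omega)
      refine mem_bot_of_span_eq_top hspan ?_
      rintro _ (rfl | rfl | rfl)
      · rw [hd₀, h11 n]
        apply_rules [add_mem, mul_mem, ih, Subalgebra.algebraMap_mem] <;> omega
      · rw [hd₁, show a (n + 1) * a (n + 11) = _ from h10 (n + 1)]
        apply_rules [add_mem, sub_mem, mul_mem, ih, Subalgebra.algebraMap_mem] <;> omega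
      · rw [hd₂, show a (n + 2) * a (n + 11) = _ from eq_sub_of_add_eq (h9' (n + 2))]
        apply_rules [add_mem, sub_mem, mul_mem, ih, Subalgebra.algebraMap_mem] <;> omega

end Integrality

/-- With six initial values equal to `1`, the Somos-6 recurrence
`x (n+6) = (x (n+1) * x (n+5) + x (n+3)^2) / x n` generates positive integers. -/
theorem stmt_8 (x : ℕ → ℚ)
    (h1 : x 1 = 1) (h2 : x 2 = 1) (h3 : x 3 = 1) (h4 : x 4 = 1) (h5 : x 5 = 1) (h6 : x 6 = 1)
    (hrec : ∀ n, 1 ≤ n → x (n + 6) = (x (n + 1) * x (n + 5) + x (n + 3) ^ 2) / x n) :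
    ∀ n, 1 ≤ n → ∃ k : ℤ, 0 < k ∧ x n = (k : ℚ) := by
  set a : ℕ → ℚ := fun n => x (n + 1) with ha
  have hinit : ∀ i < 6, a i = 1 := by
    intro i hi
    interval_cases i <;> assumption
  have hdiv : ∀ n, a (n + 6) = (a (n + 1) * a (n + 5) + a (n + 3) ^ 2) / a n :=
    fun n => hrec (n + 1) (by omega)
  have hpos : ∀ n, 0 < a n := somos6_pos (fun i hi => (hinit i hi).symm ▸ one_pos) hdiv
  have hsomos : ∀ n, a n * a (n + 6) = a (n + 1) * a (n + 5) + a (n + 3) ^ 2 := fun n => by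
    rw [hdiv n, mul_div_cancel₀ _ (hpos n).ne']
  have a6 : a 6 = 2 := by rw [hdiv]; norm_num [hinit]
  have a7 : a 7 = 3 := by rw [hdiv]; norm_num [hinit, a6]
  have a8 : a 8 = 4 := by rw [hdiv]; norm_num [hinit, a7]
  have a9 : a 9 = 8 := by rw [hdiv]; norm_num [hinit, a6, a8]
  have hint := somos6_mem_bot (RingHom.injective_int (algebraMap ℤ ℚ))
    (fun n => (hpos n).ne') hsomos (fun i hi => ⟨1, by simp [hinit i hi]⟩) (α := 9) (β := 3)
    (by norm_num [hinit, a6, a7, a9]) (by norm_num [hinit, a6, a7, a8, a9])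
  intro n hn
  obtain ⟨m, rfl⟩ := Nat.exists_eq_add_of_le' hn
  obtain ⟨k, hk⟩ := Algebra.mem_bot.1 (hint m)
  replace hk : x (m + 1) = k := by simpa [ha] using hk.symm
  exact ⟨k, by exact_mod_cast (hk ▸ hpos m : (0 : ℚ) < k), hk⟩
end

section
/- Let d : ℕ → ℤ be the sequence determined by the initial values d_1 = −1, d_2 = d_3 = d_4 = 0 and the tropical (max-plus) recurrence d_n + d_{n+4} = max(d_{n+1} + d_{n+3}, 0) for all n ≥ 1. Then d_n ≥ 0 for all n ≥ 2, the linear recurrence d_n + d_{n+4} = d_{n+1} + d_{n+3} holds for all n ≥ 1, and the closed form d_n = ⌊(n−2)/3⌋ holds for all n ≥ 2. In particular d_n grows linearly in n. -/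
/-- Tropical analogue of the Ã₁,₃ cluster recurrence: the sequence with
`d 1 = -1`, `d 2 = d 3 = d 4 = 0` satisfying `d n + d (n+4) = max (d (n+1) + d (n+3)) 0`
is nonnegative from `n = 2` on, satisfies the linear recurrence
`d n + d (n+4) = d (n+1) + d (n+3)`, and has closed form `d n = ⌊(n-2)/3⌋` for `n ≥ 2`
(hence grows linearly). -/
theorem stmt_9 (d : ℕ → ℤ)
    (h1 : d 1 = -1) (h2 : d 2 = 0) (h3 : d 3 = 0) (h4 : d 4 = 0)
    (hrec : ∀ n, 1 ≤ n → d n + d (n + 4) = max (d (n + 1) + d (n + 3)) 0) :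
    (∀ n, 2 ≤ n → 0 ≤ d n) ∧
    (∀ n, 1 ≤ n → d n + d (n + 4) = d (n + 1) + d (n + 3)) ∧
    (∀ n, 2 ≤ n → d n = ((n : ℤ) - 2) / 3) := by
  have h5 : d 5 = 1 := by
    have := hrec 1 (by norm_num)
    rw [h1, h2, h4] at this
    norm_num at this
    omega
  have key : ∀ n, 2 ≤ n → d n = ((n : ℤ) - 2) / 3 := by
    intro n
    induction n using Nat.strong_induction_on with
    | _ n ih =>
      intro hn
      match n, hn with
      | 2, _ => rw [h2]; norm_num
      | 3, _ => rw [h3]; norm_num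
      | 4, _ => rw [h4]; norm_num
      | 5, _ => rw [h5]; norm_num
      | (k+6), _ =>
        have e3 : d (k+3) = ((k:ℤ)+3-2)/3 := by
          have := ih (k+3) (by omega) (by omega); push_cast at this ⊢; linarith
        have e5 : d (k+5) = ((k:ℤ)+5-2)/3 := by
          have := ih (k+5) (by omega) (by omega); push_cast at this ⊢; linarith
        have e2 : d (k+2) = ((k:ℤ)+2-2)/3 := by
          have := ih (k+2) (by omega) (by omega); push_cast at this ⊢; linarith
        have hr := hrec (k+2) (by omega)
        have hnn : 0 ≤ d (k+2+1) + d (k+2+3) := by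
          show 0 ≤ d (k+3) + d (k+5)
          rw [e3, e5]; omega
        rw [max_eq_left hnn] at hr
        have : d (k+2+1) = d (k+3) := by norm_num
        have h24 : (k+2+4 : ℕ) = k+6 := by omega
        rw [h24] at hr
        have : d (k+2+1) + d (k+2+3) = d (k+3) + d (k+5) := by norm_num
        rw [this, e3, e5, e2] at hr
        push_cast
        omega
  refine ⟨?_, ?_, key⟩
  · intro n hn
    rw [key n hn]
    omega
  · intro n hn
    match n, hn with
    | 1, _ => rw [h1, h2, h4, h5]; norm_num
    | (k+2), _ =>
      have e0 := key (k+2) (by omega)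
      have e1 := key (k+3) (by omega)
      have e3 := key (k+5) (by omega)
      have e4 := key (k+6) (by omega)
      have : (k+2+4 : ℕ) = k+6 := by omega
      rw [this]
      have : (k+2+1 : ℕ) = k+3 := by omega
      rw [this]
      have : (k+2+3 : ℕ) = k+5 := by omega
      rw [this]
      rw [e0, e1, e3, e4]
      push_cast
      omega
end

section
/- Let d : ℕ → ℤ be the sequence determined by the initial values d_1 = −1, d_2 = d_3 = 0 and the tropical (max-plus) recurrence d_n + d_{n+3} = 2 · max(d_{n+1}, d_{n+2}) for all n ≥ 1. Then d_{n+2} ≥ d_{n+1} for all n ≥ 1, the linear recurrence d_{n+3} + d_n = 2 · d_{n+2} holds for all n ≥ 1, and the successive differences are Fibonacci numbers: d_{n+3} − d_{n+2} = F_n for all n ≥ 1, where F_n denotes the n-th Fibonacci number with F_1 = F_2 = 1. -/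
/-- Tropical analogue of the Markoff-type cluster recurrence: the sequence with
`d 1 = -1`, `d 2 = d 3 = 0` satisfying `d n + d (n+3) = 2 * max (d (n+1)) (d (n+2))`
is eventually monotone (`d (n+2) ≥ d (n+1)` for `n ≥ 1`), satisfies the linear
recurrence `d (n+3) + d n = 2 * d (n+2)`, and its successive differences are
Fibonacci numbers: `d (n+3) - d (n+2) = F n` with `F 1 = F 2 = 1`. -/
theorem stmt_10 (d : ℕ → ℤ)
    (h1 : d 1 = -1) (h2 : d 2 = 0) (h3 : d 3 = 0)
    (hrec : ∀ n, 1 ≤ n → d n + d (n + 3) = 2 * max (d (n + 1)) (d (n + 2))) :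
    (∀ n, 1 ≤ n → d (n + 1) ≤ d (n + 2)) ∧
    (∀ n, 1 ≤ n → d (n + 3) + d n = 2 * d (n + 2)) ∧
    (∀ n, 1 ≤ n → d (n + 3) - d (n + 2) = (Nat.fib n : ℤ)) := by
  have key : ∀ n, 1 ≤ n →
      d (n + 2) - d (n + 1) = (Nat.fib (n - 1) : ℤ) ∧
      d (n + 3) - d (n + 2) = (Nat.fib n : ℤ) := by
    intro n hn
    induction n, hn using Nat.le_induction with
    | base =>
      have h4 := hrec 1 (by norm_num)
      rw [h1, h2, h3] at h4
      norm_num at h4 ⊢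
      omega
    | succ n hn ih =>
      obtain ⟨ihA, ihB⟩ := ih
      have hmono : d (n + 2) ≤ d (n + 3) := by
        have : (0 : ℤ) ≤ (Nat.fib n : ℤ) := Int.natCast_nonneg _
        omega
      have hr := hrec (n + 1) (by omega)
      rw [show n + 1 + 3 = n + 4 by ring, show n + 1 + 1 = n + 2 by ring,
        show n + 1 + 2 = n + 3 by ring, max_eq_right hmono] at hr
      have hf : (Nat.fib (n + 1) : ℤ) = (Nat.fib (n - 1) : ℤ) + (Nat.fib n : ℤ) := by
        match n, hn with
        | m + 1, _ =>
          simp [Nat.fib_add_two]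
      constructor
      · simpa using ihB
      · rw [show n + 1 + 3 = n + 4 by ring, show n + 1 + 2 = n + 3 by ring, hf]
        omega
  refine ⟨fun n hn => ?_, fun n hn => ?_, fun n hn => (key n hn).2⟩
  · have := (key n hn).1
    have h0 : (0 : ℤ) ≤ (Nat.fib (n - 1) : ℤ) := Int.natCast_nonneg _
    omega
  · have hmono : d (n + 1) ≤ d (n + 2) := by
      have := (key n hn).1
      have h0 : (0 : ℤ) ≤ (Nat.fib (n - 1) : ℤ) := Int.natCast_nonneg _
      omega
    have hr := hrec n hn
    rw [max_eq_right hmono] at hr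
    omega
end

section
/- Let x : ℕ → ℝ be a sequence of positive real numbers satisfying the Somos-5 recurrence x_n · x_{n+5} = x_{n+1} · x_{n+4} + x_{n+2} · x_{n+3} for all n ≥ 1, and define u_n := (x_n · x_{n+3})/(x_{n+1} · x_{n+2}). Then u satisfies the second-order U-system u_n · u_{n+1} · u_{n+2} = u_{n+1} + 1, i.e. u_n · u_{n+2} = (u_{n+1} + 1)/u_{n+1}, for all n ≥ 1. -/
/-! The product `u n * u (n+1) * u (n+2)` telescopes to `x n * x (n+5) / (x (n+2) * x (n+3))`,
while `u (n+1) + 1` has the same denominator and numerator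
`x (n+1) * x (n+4) + x (n+2) * x (n+3)`; the Somos-5 recurrence says the two numerators agree. -/

namespace Somos5

variable {K : Type*} [Field K]

def u (x : ℕ → K) (n : ℕ) : K := x n * x (n + 3) / (x (n + 1) * x (n + 2))

variable {x : ℕ → K}

theorem u_mul_u_mul_u (hx : ∀ m, x m ≠ 0) (n : ℕ) :
    u x n * u x (n + 1) * u x (n + 2) = x n * x (n + 5) / (x (n + 2) * x (n + 3)) := by
  have := hx (n + 1); have := hx (n + 2); have := hx (n + 3); have := hx (n + 4)
  simp only [u]
  field_simp

theorem u_succ_add_one (hx : ∀ m, x m ≠ 0) (n : ℕ) :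
    u x (n + 1) + 1 = (x (n + 1) * x (n + 4) + x (n + 2) * x (n + 3)) / (x (n + 2) * x (n + 3)) := by
  have := hx (n + 2); have := hx (n + 3)
  simp only [u]
  field_simp

theorem u_mul_u_mul_u_eq_u_succ_add_one (hx : ∀ m, x m ≠ 0) {n : ℕ}
    (hrec : x n * x (n + 5) = x (n + 1) * x (n + 4) + x (n + 2) * x (n + 3)) :
    u x n * u x (n + 1) * u x (n + 2) = u x (n + 1) + 1 := by
  rw [u_mul_u_mul_u hx, u_succ_add_one hx, hrec]

theorem u_ne_zero (hx : ∀ m, x m ≠ 0) (n : ℕ) : u x n ≠ 0 := by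
  simp only [u]
  have := hx n; have := hx (n + 1); have := hx (n + 2); have := hx (n + 3)
  positivity

end Somos5

/-- For the Somos-5 recurrence `x n * x (n+5) = x (n+1) * x (n+4) + x (n+2) * x (n+3)`
on positive reals, `u n = x n * x (n+3) / (x (n+1) * x (n+2))` satisfies the U-system
`u n * u (n+1) * u (n+2) = u (n+1) + 1`, i.e. `u n * u (n+2) = (u (n+1) + 1) / u (n+1)`. -/
theorem stmt_14 (x : ℕ → ℝ) (hpos : ∀ n, 0 < x n)
    (hrec : ∀ n, 1 ≤ n → x n * x (n + 5) = x (n + 1) * x (n + 4) + x (n + 2) * x (n + 3))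
    (u : ℕ → ℝ) (hu : ∀ n, u n = x n * x (n + 3) / (x (n + 1) * x (n + 2))) :
    ∀ n, 1 ≤ n →
      u n * u (n + 1) * u (n + 2) = u (n + 1) + 1 ∧
      u n * u (n + 2) = (u (n + 1) + 1) / u (n + 1) := by
  obtain rfl : u = Somos5.u x := funext hu
  have hx : ∀ m, x m ≠ 0 := fun m => (hpos m).ne'
  intro n hn
  have key := Somos5.u_mul_u_mul_u_eq_u_succ_add_one hx (hrec n hn)
  exact ⟨key, eq_div_of_mul_eq (Somos5.u_ne_zero hx (n + 1)) (by linear_combination key)⟩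
end

section
/- Let u : ℕ → ℝ be a sequence of positive real numbers satisfying u_n · u_{n+1} · u_{n+2} = u_{n+1} + 1 for all n ≥ 1. Then the quantity H_n := u_n + u_{n+1} + 1/u_n + 1/u_{n+1} + 1/(u_n · u_{n+1}) is independent of n. -/
/-- For the Somos-5 U-system `u n * u (n+1) * u (n+2) = u (n+1) + 1` on positive reals,
the quantity `H n = u n + u (n+1) + 1/u n + 1/u (n+1) + 1/(u n * u (n+1))` is a
conserved quantity: it is independent of `n`. -/
theorem stmt_15 (u : ℕ → ℝ) (hpos : ∀ n, 0 < u n)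
    (hrec : ∀ n, 1 ≤ n → u n * u (n + 1) * u (n + 2) = u (n + 1) + 1)
    (H : ℕ → ℝ)
    (hH : ∀ n, H n = u n + u (n + 1) + 1 / u n + 1 / u (n + 1) + 1 / (u n * u (n + 1))) :
    ∀ n, 1 ≤ n → H (n + 1) = H n := by
  intro n hn
  have h := hrec n hn
  have h0 := (hpos n).ne'
  have h1 := (hpos (n + 1)).ne'
  have h2 := (hpos (n + 2)).ne'
  have hs : u (n + 2) = (u (n + 1) + 1) / (u n * u (n + 1)) := by
    field_simp
    linarith [h]
  have h3 : u (n + 1) + 1 ≠ 0 := by linarith [hpos (n + 1)]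
  rw [hH, hH, show n + 1 + 1 = n + 2 from rfl, hs]
  field_simp
  ring
end

section
/- Let x : ℕ → ℝ be a sequence of positive real numbers satisfying the Somos-5 recurrence x_n · x_{n+5} = x_{n+1} · x_{n+4} + x_{n+2} · x_{n+3} for all n ≥ 1, and define F_j(n) := (x_{n+j−1} · x_{n+j+1})/x_{n+j}² for j = 1, 2, 3. Then both quantities H_1(n) := F_1F_2F_3 + 1/F_1 + 1/F_2 + 1/F_3 + 1/(F_1F_2F_3) and H_2(n) := F_1F_2 + F_2F_3 + 1/(F_1F_2) + 1/(F_2F_3) + 1/(F_1F_2²F_3) (with F_j = F_j(n)) are independent of n, i.e. they are first integrals of the Somos-5 map. -/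
/-!
Writing `y = log x`, the ratio `F j n` is a second difference of `y`, so the Somos-5 relation
`x₀x₅ = x₁x₄ + x₂x₃`, divided by `x₁x₄`, becomes `F₁F₂F₃F₄ = 1 + 1/(F₂F₃)`. Hence the triple
`(F₁, F₂, F₃)` evolves by the birational map `(a, b, c) ↦ (b, c, (1 + bc)/(ab²c²))`, and `H₁`, `H₂`
are rational functions of the triple invariant under this map.
-/

section ReducedMap

variable {K : Type*} [Field K]

def somos5H₁ (a b c : K) : K :=
  a * b * c + 1 / a + 1 / b + 1 / c + 1 / (a * b * c)

def somos5H₂ (a b c : K) : K :=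
  a * b + b * c + 1 / (a * b) + 1 / (b * c) + 1 / (a * b ^ 2 * c)

variable {a b c d : K}

theorem somos5H₁_step (ha : a ≠ 0) (hb : b ≠ 0) (hc : c ≠ 0) (hd : d ≠ 0)
    (h : a * b ^ 2 * c ^ 2 * d = 1 + b * c) : somos5H₁ b c d = somos5H₁ a b c := by
  unfold somos5H₁
  field_simp
  linear_combination (d - a) * h

theorem somos5H₂_step (ha : a ≠ 0) (hb : b ≠ 0) (hc : c ≠ 0) (hd : d ≠ 0)
    (h : a * b ^ 2 * c ^ 2 * d = 1 + b * c) : somos5H₂ b c d = somos5H₂ a b c := by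
  unfold somos5H₂
  field_simp
  linear_combination (c * d - a * b) * h

end ReducedMap

section SecondRatio

variable {K : Type*} [Field K] {x : ℕ → K}

def secondRatio (x : ℕ → K) (n : ℕ) : K :=
  x n * x (n + 2) / x (n + 1) ^ 2

theorem secondRatio_ne_zero (hx : ∀ n, x n ≠ 0) (n : ℕ) : secondRatio x n ≠ 0 := by
  unfold secondRatio
  have := hx n; have := hx (n + 1); have := hx (n + 2)
  positivity

theorem secondRatio_somos5 (hx : ∀ n, x n ≠ 0) {n : ℕ}
    (hrec : x n * x (n + 5) = x (n + 1) * x (n + 4) + x (n + 2) * x (n + 3)) :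
    secondRatio x n * secondRatio x (n + 1) ^ 2 * secondRatio x (n + 2) ^ 2 * secondRatio x (n + 3)
      = 1 + secondRatio x (n + 1) * secondRatio x (n + 2) := by
  unfold secondRatio
  have := hx (n + 1); have := hx (n + 2); have := hx (n + 3); have := hx (n + 4)
  field_simp
  rw [show n + 3 + 2 = n + 5 by ring]
  linear_combination hrec

theorem somos5H₁_secondRatio_succ (hx : ∀ n, x n ≠ 0) {n : ℕ}
    (hrec : x n * x (n + 5) = x (n + 1) * x (n + 4) + x (n + 2) * x (n + 3)) :
    somos5H₁ (secondRatio x (n + 1)) (secondRatio x (n + 2)) (secondRatio x (n + 3))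
      = somos5H₁ (secondRatio x n) (secondRatio x (n + 1)) (secondRatio x (n + 2)) :=
  somos5H₁_step (secondRatio_ne_zero hx _) (secondRatio_ne_zero hx _)
    (secondRatio_ne_zero hx _) (secondRatio_ne_zero hx _) (secondRatio_somos5 hx hrec)

theorem somos5H₂_secondRatio_succ (hx : ∀ n, x n ≠ 0) {n : ℕ}
    (hrec : x n * x (n + 5) = x (n + 1) * x (n + 4) + x (n + 2) * x (n + 3)) :
    somos5H₂ (secondRatio x (n + 1)) (secondRatio x (n + 2)) (secondRatio x (n + 3))
      = somos5H₂ (secondRatio x n) (secondRatio x (n + 1)) (secondRatio x (n + 2)) :=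
  somos5H₂_step (secondRatio_ne_zero hx _) (secondRatio_ne_zero hx _)
    (secondRatio_ne_zero hx _) (secondRatio_ne_zero hx _) (secondRatio_somos5 hx hrec)

end SecondRatio

/-- For the Somos-5 recurrence `x n * x (n+5) = x (n+1) * x (n+4) + x (n+2) * x (n+3)`
on positive reals, with `F j n = x (n+j-1) * x (n+j+1) / x (n+j)^2` for `j = 1, 2, 3`,
the quantities
`H₁ = F₁F₂F₃ + 1/F₁ + 1/F₂ + 1/F₃ + 1/(F₁F₂F₃)` and
`H₂ = F₁F₂ + F₂F₃ + 1/(F₁F₂) + 1/(F₂F₃) + 1/(F₁F₂²F₃)`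
are first integrals: both are independent of `n`. -/
theorem stmt_16 (x : ℕ → ℝ) (hpos : ∀ n, 0 < x n)
    (hrec : ∀ n, 1 ≤ n → x n * x (n + 5) = x (n + 1) * x (n + 4) + x (n + 2) * x (n + 3))
    (F : ℕ → ℕ → ℝ)
    (hF : ∀ j n, F j n = x (n + j - 1) * x (n + j + 1) / x (n + j) ^ 2)
    (H₁ H₂ : ℕ → ℝ)
    (hH₁ : ∀ n, H₁ n = F 1 n * F 2 n * F 3 n + 1 / F 1 n + 1 / F 2 n + 1 / F 3 n
      + 1 / (F 1 n * F 2 n * F 3 n))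
    (hH₂ : ∀ n, H₂ n = F 1 n * F 2 n + F 2 n * F 3 n + 1 / (F 1 n * F 2 n)
      + 1 / (F 2 n * F 3 n) + 1 / (F 1 n * F 2 n ^ 2 * F 3 n)) :
    (∀ n, 1 ≤ n → H₁ (n + 1) = H₁ n) ∧ (∀ n, 1 ≤ n → H₂ (n + 1) = H₂ n) := by
  have hx : ∀ n, x n ≠ 0 := fun n => (hpos n).ne'
  have hF₁ : ∀ n, F 1 n = secondRatio x n := hF 1
  have hF₂ : ∀ n, F 2 n = secondRatio x (n + 1) := hF 2
  have hF₃ : ∀ n, F 3 n = secondRatio x (n + 2) := hF 3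
  have hH₁' : ∀ n,
      H₁ n = somos5H₁ (secondRatio x n) (secondRatio x (n + 1)) (secondRatio x (n + 2)) :=
    fun n => by rw [hH₁, hF₁, hF₂, hF₃, somos5H₁]
  have hH₂' : ∀ n,
      H₂ n = somos5H₂ (secondRatio x n) (secondRatio x (n + 1)) (secondRatio x (n + 2)) :=
    fun n => by rw [hH₂, hF₁, hF₂, hF₃, somos5H₂]
  refine ⟨fun n hn => ?_, fun n hn => ?_⟩
  · rw [hH₁', hH₁']
    exact somos5H₁_secondRatio_succ hx (hrec n hn)
  · rw [hH₂', hH₂']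
    exact somos5H₂_secondRatio_succ hx (hrec n hn)
end

section
/- Let α, γ be positive real numbers and let x : ℕ → ℝ be a sequence of positive real numbers satisfying x_n · x_{n+6} = α · x_{n+1} · x_{n+5} + γ · x_{n+3}² for all n ≥ 1. Define u_n := (x_n · x_{n+2})/x_{n+1}². Then u satisfies the fourth-order U-system u_n · u_{n+4} = (α · u_{n+1} · u_{n+2}² · u_{n+3} + γ)/(u_{n+1}² · u_{n+2}³ · u_{n+3}²) for all n ≥ 1. -/
/-! In logarithmic coordinates `u` is the second difference of `x`, so the weighted products
`u (n+1) u (n+2)^2 u (n+3)` and `u n u (n+1)^2 u (n+2)^3 u (n+3)^2 u (n+4)` telescope to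
`x (n+1) x (n+5) / x (n+3)^2` and `x n x (n+6) / x (n+3)^2`. The U-system is therefore the
Somos-6 recurrence divided by `x (n+3)^2`. -/

namespace Somos6

variable {K : Type*} [Field K]

def uCoord (x : ℕ → K) (n : ℕ) : K := x n * x (n + 2) / x (n + 1) ^ 2

variable {x : ℕ → K} (hx : ∀ k, x k ≠ 0) (n : ℕ)
include hx

theorem uCoord_ne_zero : uCoord x n ≠ 0 := by
  unfold uCoord
  have := hx n; have := hx (n + 1); have := hx (n + 2)
  positivity

theorem uCoord_inner_product :
    uCoord x (n + 1) * uCoord x (n + 2) ^ 2 * uCoord x (n + 3) =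
      x (n + 1) * x (n + 5) / x (n + 3) ^ 2 := by
  have := hx (n + 2); have := hx (n + 3); have := hx (n + 4)
  simp only [uCoord]
  field_simp

theorem uCoord_outer_product :
    uCoord x n * uCoord x (n + 4) *
        (uCoord x (n + 1) ^ 2 * uCoord x (n + 2) ^ 3 * uCoord x (n + 3) ^ 2) =
      x n * x (n + 6) / x (n + 3) ^ 2 := by
  have := hx (n + 1); have := hx (n + 2); have := hx (n + 3); have := hx (n + 4)
  have := hx (n + 5)
  simp only [uCoord]
  field_simp

end Somos6

theorem stmt_17_general (α γ : ℝ)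
    (x : ℕ → ℝ) (hpos : ∀ n, 0 < x n)
    (hrec : ∀ n, 1 ≤ n →
      x n * x (n + 6) = α * x (n + 1) * x (n + 5) + γ * x (n + 3) ^ 2)
    (u : ℕ → ℝ) (hu : ∀ n, u n = x n * x (n + 2) / x (n + 1) ^ 2) :
    ∀ n, 1 ≤ n →
      u n * u (n + 4) = (α * u (n + 1) * u (n + 2) ^ 2 * u (n + 3) + γ) /
        (u (n + 1) ^ 2 * u (n + 2) ^ 3 * u (n + 3) ^ 2) := by
  intro n hn
  have hx : ∀ k, x k ≠ 0 := fun k => (hpos k).ne'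
  obtain rfl : u = Somos6.uCoord x := funext hu
  have hden : Somos6.uCoord x (n + 1) ^ 2 * Somos6.uCoord x (n + 2) ^ 3 *
      Somos6.uCoord x (n + 3) ^ 2 ≠ 0 := by
    simp [Somos6.uCoord_ne_zero hx]
  rw [eq_div_iff hden, Somos6.uCoord_outer_product hx, hrec n hn, add_div,
    mul_div_cancel_right₀ _ (pow_ne_zero 2 (hx _)), mul_assoc α (x _), mul_div_assoc,
    ← Somos6.uCoord_inner_product hx]
  ring

/-- For the three-term Somos-6 recurrence
`x n * x (n+6) = α * x (n+1) * x (n+5) + γ * x (n+3)^2` on positive reals (with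
`α, γ > 0`), the quantities `u n = x n * x (n+2) / x (n+1)^2` satisfy the fourth-order
U-system `u n * u (n+4) = (α * u (n+1) * u (n+2)^2 * u (n+3) + γ) /
(u (n+1)^2 * u (n+2)^3 * u (n+3)^2)`. -/
theorem stmt_17 (α γ : ℝ) (hα : 0 < α) (hγ : 0 < γ)
    (x : ℕ → ℝ) (hpos : ∀ n, 0 < x n)
    (hrec : ∀ n, 1 ≤ n →
      x n * x (n + 6) = α * x (n + 1) * x (n + 5) + γ * x (n + 3) ^ 2)
    (u : ℕ → ℝ) (hu : ∀ n, u n = x n * x (n + 2) / x (n + 1) ^ 2) :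
    ∀ n, 1 ≤ n →
      u n * u (n + 4) = (α * u (n + 1) * u (n + 2) ^ 2 * u (n + 3) + γ) /
        (u (n + 1) ^ 2 * u (n + 2) ^ 3 * u (n + 3) ^ 2) :=
  stmt_17_general α γ x hpos hrec u hu
end

section
/- Let N ≥ 2, let (a_1,…,a_{N−1}) be integers with a_j = a_{N−j} for all j, and suppose the first nonzero a_j is positive; write [a]_+ := max(a,0). Let x : ℕ → ℝ and 𝒵 : ℕ → ℝ be sequences of positive reals such that the modified T-system x_n · x_{n+N} = 𝒵_n · ( ∏_{j=1}^{N−1} x_{n+j}^{[a_j]_+} + ∏_{j=1}^{N−1} x_{n+j}^{[−a_j]_+} ) holds for all n ≥ 1, and define y_n := ∏_{j=1}^{N−1} x_{n+j}^{a_j}. Then y satisfies the Y-system y_n · y_{n+N} = ( ∏_{j=1}^{N−1} (1 + y_{n+j})^{[a_j]_+} ) / ( ∏_{j=1}^{N−1} (1 + y_{n+j}^{−1})^{[−a_j]_+} ) for all n ≥ 1 if and only if 𝒵 satisfies the Z-system ∏_{j=1}^{N−1} 𝒵_{n+j}^{a_j} = 1 for all n ≥ 1. -/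
/-- For a period-1 palindromic tuple `(a 1, …, a (N-1))` whose first nonzero entry is
positive, suppose positive sequences `x` and `Z` satisfy the modified T-system
`x n * x (n+N) = Z n * (∏ x (n+j) ^ [a j]₊ + ∏ x (n+j) ^ [-a j]₊)`, and set
`y n = ∏ x (n+j) ^ (a j)`. Then `y` satisfies the Y-system
`y n * y (n+N) = ∏ (1 + y (n+j)) ^ [a j]₊ / ∏ (1 + (y (n+j))⁻¹) ^ [-a j]₊`
for all `n ≥ 1` if and only if `Z` satisfies the Z-system
`∏ Z (n+j) ^ (a j) = 1` for all `n ≥ 1`. -/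
theorem stmt_19 (N : ℕ) (hN : 2 ≤ N) (a : ℕ → ℤ)
    (hpal : ∀ j, 1 ≤ j → j ≤ N - 1 → a j = a (N - j))
    (hfirst : ∀ j, 1 ≤ j → j ≤ N - 1 → (∀ i, 1 ≤ i → i < j → a i = 0) → 0 ≤ a j)
    (x Z : ℕ → ℝ) (hxpos : ∀ n, 0 < x n) (hZpos : ∀ n, 0 < Z n)
    (hT : ∀ n, 1 ≤ n → x n * x (n + N) =
      Z n * (∏ j ∈ Finset.Icc 1 (N - 1), x (n + j) ^ (max (a j) 0)
        + ∏ j ∈ Finset.Icc 1 (N - 1), x (n + j) ^ (max (-a j) 0)))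
    (y : ℕ → ℝ) (hy : ∀ n, y n = ∏ j ∈ Finset.Icc 1 (N - 1), x (n + j) ^ (a j)) :
    (∀ n, 1 ≤ n → y n * y (n + N) =
      (∏ j ∈ Finset.Icc 1 (N - 1), (1 + y (n + j)) ^ (max (a j) 0)) /
      (∏ j ∈ Finset.Icc 1 (N - 1), (1 + (y (n + j))⁻¹) ^ (max (-a j) 0))) ↔
    (∀ n, 1 ≤ n → ∏ j ∈ Finset.Icc 1 (N - 1), Z (n + j) ^ (a j) = 1) := by
  have hx0 : ∀ m, x m ≠ 0 := fun m => (hxpos m).ne'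
  set S := Finset.Icc 1 (N - 1) with hS
  set P : ℕ → ℝ := fun m => ∏ k ∈ S, x (m + k) ^ (max (a k) 0) with hP
  set M : ℕ → ℝ := fun m => ∏ k ∈ S, x (m + k) ^ (max (-a k) 0) with hM
  have hPpos : ∀ m, 0 < P m := fun m => Finset.prod_pos fun k _ => zpow_pos (hxpos _) _
  have hMpos : ∀ m, 0 < M m := fun m => Finset.prod_pos fun k _ => zpow_pos (hxpos _) _
  have hypos : ∀ m, 0 < y m := fun m => by
    rw [hy]; exact Finset.prod_pos fun k _ => zpow_pos (hxpos _) _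
  have hyPM : ∀ m, y m = P m / M m := by
    intro m
    rw [hy, hP, hM, ← Finset.prod_div_distrib]
    refine Finset.prod_congr rfl fun k _ => ?_
    rw [← zpow_sub₀ (hx0 _)]
    congr 1
    omega
  have h1y : ∀ m, 1 + y m = (P m + M m) / M m := by
    intro m
    rw [hyPM, eq_div_iff (hMpos m).ne', add_mul, one_mul, div_mul_cancel₀ _ (hMpos m).ne']
    ring
  have h1yi : ∀ m, 1 + (y m)⁻¹ = (P m + M m) / P m := by
    intro m
    rw [hyPM, inv_div, eq_div_iff (hPpos m).ne', add_mul, one_mul,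
      div_mul_cancel₀ _ (hPpos m).ne']
  have hPM : ∀ m, 1 ≤ m → P m + M m = x m * x (m + N) / Z m := by
    intro m hm
    rw [eq_div_iff (hZpos m).ne', hT m hm]
    exact mul_comm _ _
  -- symmetry lemma
  have hCD : ∀ n : ℕ, (∏ j ∈ S, M (n + j) ^ (max (a j) 0)) =
      ∏ j ∈ S, P (n + j) ^ (max (-a j) 0) := by
    intro n
    simp only [hP, hM, ← Finset.prod_zpow]
    rw [Finset.prod_comm]
    refine Finset.prod_congr rfl fun j _ => Finset.prod_congr rfl fun k _ => ?_
    rw [← zpow_mul, ← zpow_mul]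
    have : n + j + k = n + k + j := by omega
    rw [this, mul_comm]
  -- main pointwise computation
  have key : ∀ n, 1 ≤ n →
      ((y n * y (n + N) =
        (∏ j ∈ S, (1 + y (n + j)) ^ (max (a j) 0)) /
        (∏ j ∈ S, (1 + (y (n + j))⁻¹) ^ (max (-a j) 0))) ↔
      (∏ j ∈ S, Z (n + j) ^ (a j)) = 1) := by
    intro n hn
    have hW : (0:ℝ) < ∏ j ∈ S, Z (n + j) ^ (a j) :=
      Finset.prod_pos fun k _ => zpow_pos (hZpos _) _
    have hrhs : (∏ j ∈ S, (1 + y (n + j)) ^ (max (a j) 0)) /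
        (∏ j ∈ S, (1 + (y (n + j))⁻¹) ^ (max (-a j) 0)) =
        y n * y (n + N) / (∏ j ∈ S, Z (n + j) ^ (a j)) := by
      have e1 : ∀ j ∈ S, (1 + y (n + j)) ^ (max (a j) 0) =
          (P (n + j) + M (n + j)) ^ (max (a j) 0) / M (n + j) ^ (max (a j) 0) := by
        intro j _; rw [h1y, div_zpow]
      have e2 : ∀ j ∈ S, (1 + (y (n + j))⁻¹) ^ (max (-a j) 0) =
          (P (n + j) + M (n + j)) ^ (max (-a j) 0) / P (n + j) ^ (max (-a j) 0) := by
        intro j _; rw [h1yi, div_zpow]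
      rw [Finset.prod_congr rfl e1, Finset.prod_congr rfl e2,
        Finset.prod_div_distrib, Finset.prod_div_distrib, hCD n]
      have hA0 : ∀ j ∈ S, (P (n+j) + M (n+j)) ≠ 0 :=
        fun j _ => (add_pos (hPpos _) (hMpos _)).ne'
      have hD0 : (∏ j ∈ S, P (n + j) ^ (max (-a j) 0)) ≠ 0 :=
        (Finset.prod_pos fun k _ => zpow_pos (hPpos _) _).ne'
      have hB0 : (∏ j ∈ S, (P (n+j) + M (n+j)) ^ (max (-a j) 0)) ≠ 0 :=
        (Finset.prod_pos fun k _ => zpow_pos (add_pos (hPpos _) (hMpos _)) _).ne'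
      rw [div_div_div_comm, div_self hD0, div_one, ← Finset.prod_div_distrib]
      have e3 : ∀ j ∈ S, (P (n+j) + M (n+j)) ^ (max (a j) 0) /
          (P (n+j) + M (n+j)) ^ (max (-a j) 0) = (P (n+j) + M (n+j)) ^ (a j) := by
        intro j hj
        rw [← zpow_sub₀ (hA0 j hj)]
        congr 1; omega
      rw [Finset.prod_congr rfl e3]
      have e4 : ∀ j ∈ S, (P (n+j) + M (n+j)) ^ (a j) =
          (x (n+j) ^ (a j) * x (n+j+N) ^ (a j)) / Z (n+j) ^ (a j) := by
        intro j hj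
        have hj1 : 1 ≤ n + j := by omega
        rw [hPM (n+j) hj1, div_zpow, mul_zpow]
      rw [Finset.prod_congr rfl e4, Finset.prod_div_distrib, Finset.prod_mul_distrib]
      congr 1
      rw [hy n, hy (n+N)]
      congr 1
      refine Finset.prod_congr rfl fun j _ => ?_
      congr 2
      omega
    rw [hrhs]
    constructor
    · intro h
      have hy0 : y n * y (n + N) ≠ 0 := (mul_pos (hypos n) (hypos _)).ne'
      field_simp at h
      exact mul_left_cancel₀ hy0 (by rw [h, mul_one])
    · intro h; rw [h, div_one]
  exact forall_congr' fun n => imp_congr_right fun hn => key n hn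
end
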